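/- Let p_m(x) := P_S(S_m = x) denote the m-step transition probabilities of simple random walk on ℤ started at 0. There exists a constant C < ∞ such that for all integers k ≥ 1, all T > 0 and all n ≥ 1: n^{−k/2} Σ_{1 ≤ i₁ < i₂ < ⋯ < i_k ≤ ⌊Tn⌋} Σ_{(x₁,…,x_k) ∈ ℤ^k} Π_{j=1}^k p_{i_j − i_{j−1}}(x_j − x_{j−1})² ≤ C^k T^{k/2} / Γ(k/2 + 1), where i₀ := 0, x₀ := 0 and Γ is the Gamma function. -/

import Mathlib

noncomputable section

/-- Position at time `k` of the simple random walk on `ℤ` with `m` steps encoded by `σ`. -/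
def walkPos (m : ℕ) (σ : Fin m → Bool) (k : ℕ) : ℤ :=
  ∑ i : Fin m, if (i : ℕ) < k then (if σ i then 1 else -1) else 0

/-- `p_m(x) = P_S(S_m = x)`, the `m`-step transition probability of simple random walk
on `ℤ` started at `0`. -/
def srwProb (m : ℕ) (x : ℤ) : ℝ :=
  ((2 : ℝ) ^ m)⁻¹ *
    ((Finset.univ.filter fun σ : Fin m → Bool => walkPos m σ m = x).card : ℝ)

/-- Strictly increasing time tuples `1 ≤ i₁ < ⋯ < i_k ≤ M`. -/
def incrTimes (k M : ℕ) : Finset (Fin k → ℕ) :=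
  (Fintype.piFinset fun _ : Fin k => Finset.Icc 1 M).filter
    fun i => ∀ a b : Fin k, a < b → i a < i b

/-- The previous value `v_{j-1}` of a tuple `v`, with convention `v₀ = v0`. -/
def prevV {α : Type*} {k : ℕ} (v0 : α) (v : Fin k → α) (j : Fin k) : α :=
  if h : (j : ℕ) = 0 then v0
  else v ⟨(j : ℕ) - 1, lt_of_le_of_lt (Nat.sub_le _ 1) j.isLt⟩


/-!
Write `m_j = i_j - i_{j-1}`. Since `x ↦ (x_j - x_{j-1})_j` is injective on `ℤ^k`, the inner sum
is at most `∏_j ∑_z p_{m_j}(z)^2 ≤ ∏_j max_z p_{m_j}(z)`, and `p_m(z) ≤ √(8/m)` because a fiber of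
`S_m` is a set of `m`-step walks with a fixed number of up-steps, counted by a binomial
coefficient bounded by the central one. The remaining sum of `∏_j m_j^{-1/2}` over
`m_1 + ⋯ + m_k ≤ Tn` is bounded by Rankin's trick with `t = k / (Tn)`: it is at most
`e^{tTn} (3/√t)^k = (3e)^k (Tn/k)^{k/2}`, and `k^{k/2} ≥ Γ(k/2 + 1)`.
-/

open Finset Real

lemma walkPos_self (m : ℕ) (σ : Fin m → Bool) :
    walkPos m σ m = 2 * #{i | σ i} - m := by
  have hsign : ∀ i : Fin m, (if σ i then (1 : ℤ) else -1) = (if σ i then 2 else 0) - 1 := by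
    intro i; cases σ i <;> rfl
  simp only [walkPos, Fin.is_lt, if_true, hsign, sum_sub_distrib, sum_ite, sum_const_zero,
    sum_const, card_univ, Fintype.card_fin, mul_one, add_zero, nsmul_eq_mul]
  ring

lemma abs_walkPos_self_le (m : ℕ) (σ : Fin m → Bool) : |walkPos m σ m| ≤ m := by
  have := card_le_univ (univ.filter fun i => σ i)
  rw [Fintype.card_fin] at this
  rw [walkPos_self, abs_le]
  omega

lemma centralBinom_sq_mul_succ_le (n : ℕ) : n.centralBinom ^ 2 * (n + 1) ≤ 16 ^ n := by
  induction n with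
  | zero => simp
  | succ n ih =>
    have hrec := Nat.succ_mul_centralBinom_succ n
    refine Nat.le_of_mul_le_mul_left ?_ (pow_pos n.succ_pos 3)
    calc (n + 1) ^ 3 * ((n + 1).centralBinom ^ 2 * (n + 1 + 1))
        = 4 * (2 * n + 1) ^ 2 * (n + 2) * (n.centralBinom ^ 2 * (n + 1)) := by
          linear_combination (n + 1) * (n + 2) *
            ((n + 1) * (n + 1).centralBinom + 2 * (2 * n + 1) * n.centralBinom) * hrec
      _ ≤ 4 * (2 * n + 1) ^ 2 * (n + 2) * 16 ^ n := Nat.mul_le_mul_left _ ih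
      _ ≤ (n + 1) ^ 3 * 16 * 16 ^ n := Nat.mul_le_mul_right _ (by nlinarith)
      _ = (n + 1) ^ 3 * 16 ^ (n + 1) := by ring

lemma choose_sq_mul_le (m r : ℕ) : m.choose r ^ 2 * m ≤ 8 * 4 ^ m := by
  set t := (m + 1) / 2
  have hchoose : m.choose r ≤ t.centralBinom :=
    (Nat.choose_le_choose r (by omega)).trans (Nat.choose_le_centralBinom r t)
  calc m.choose r ^ 2 * m ≤ t.centralBinom ^ 2 * (2 * (t + 1)) := by gcongr; omega
    _ = 2 * (t.centralBinom ^ 2 * (t + 1)) := by ring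
    _ ≤ 2 * 4 ^ (2 * t) := by
        rw [pow_mul]; exact Nat.mul_le_mul_left 2 (centralBinom_sq_mul_succ_le t)
    _ ≤ 2 * 4 ^ (m + 1) := by gcongr <;> omega
    _ = 8 * 4 ^ m := by ring

/-- A walk ending at `x` has exactly `(x + m) / 2` up-steps. -/
lemma card_walkPos_self_eq_le (m : ℕ) (x : ℤ) :
    #{σ : Fin m → Bool | walkPos m σ m = x} ≤ m.choose ((x + m) / 2).toNat :=
  calc #{σ : Fin m → Bool | walkPos m σ m = x}
      ≤ #(powersetCard ((x + m) / 2).toNat (univ : Finset (Fin m))) := by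
        refine card_le_card_of_injOn (fun σ => ({i | σ i} : Finset (Fin m)))
          (fun σ hσ => ?_) (fun σ _ τ _ hστ => ?_)
        · have := walkPos_self m σ
          simp only [coe_filter, mem_univ, true_and, Set.mem_ofPred_eq] at hσ
          simp only [mem_coe, mem_powersetCard, subset_univ, true_and]
          omega
        · funext i
          simpa using congrArg (i ∈ ·) hστ
    _ = m.choose ((x + m) / 2).toNat := by simp

lemma srwProb_nonneg (m : ℕ) (x : ℤ) : 0 ≤ srwProb m x := by
  unfold srwProb; positivity

lemma srwProb_sq_mul_le (m : ℕ) (x : ℤ) : srwProb m x ^ 2 * m ≤ 8 := by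
  have hcard : (#{σ : Fin m → Bool | walkPos m σ m = x} : ℝ) ≤ m.choose ((x + m) / 2).toNat := by
    exact_mod_cast card_walkPos_self_eq_le m x
  have hchoose : ((m.choose ((x + m) / 2).toNat : ℕ) : ℝ) ^ 2 * m ≤ 8 * 4 ^ m := by
    exact_mod_cast choose_sq_mul_le m _
  calc srwProb m x ^ 2 * m
      = (#{σ : Fin m → Bool | walkPos m σ m = x} : ℝ) ^ 2 * m / 4 ^ m := by
        rw [srwProb, show (4 : ℝ) ^ m = ((2 : ℝ) ^ m) ^ 2 by
          rw [← pow_mul, mul_comm, pow_mul]; norm_num]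
        field_simp
    _ ≤ 8 * 4 ^ m / 4 ^ m := by
        refine div_le_div_of_nonneg_right (hchoose.trans' ?_) (by positivity)
        gcongr
    _ = 8 := by field_simp

lemma srwProb_le {m : ℕ} (hm : 0 < m) (x : ℤ) : srwProb m x ≤ √8 / √m := by
  rw [← Real.sqrt_div' _ (Nat.cast_nonneg m), Real.le_sqrt (srwProb_nonneg m x) (by positivity),
    le_div_iff₀ (by exact_mod_cast hm)]
  exact srwProb_sq_mul_le m x

lemma srwProb_eq_zero_of_lt_abs {m : ℕ} {x : ℤ} (hx : (m : ℤ) < |x|) : srwProb m x = 0 := by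
  have hempty : ({σ : Fin m → Bool | walkPos m σ m = x} : Finset _) = ∅ :=
    filter_eq_empty_iff.mpr fun σ _ hσ => by
      have := abs_walkPos_self_le m σ
      rw [hσ] at this
      omega
  simp [srwProb, hempty]

lemma hasSum_srwProb (m : ℕ) : HasSum (srwProb m) 1 := by
  have hsum : srwProb m = fun x => ∑ σ : Fin m → Bool,
      if x = walkPos m σ m then ((2 : ℝ) ^ m)⁻¹ else 0 := by
    funext x
    simp [srwProb, sum_ite, eq_comm, mul_comm]
  rw [hsum]
  convert hasSum_sum fun σ (_ : σ ∈ univ) => hasSum_ite_eq (walkPos m σ m) ((2 : ℝ) ^ m)⁻¹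
  simp

lemma sum_sq_srwProb_le {m : ℕ} (hm : 0 < m) (s : Finset ℤ) :
    ∑ z ∈ s, srwProb m z ^ 2 ≤ √8 / √m :=
  calc ∑ z ∈ s, srwProb m z ^ 2 ≤ ∑ z ∈ s, √8 / √m * srwProb m z :=
        sum_le_sum fun z _ => by
          rw [sq]; exact mul_le_mul_of_nonneg_right (srwProb_le hm z) (srwProb_nonneg m z)
    _ = √8 / √m * ∑ z ∈ s, srwProb m z := (mul_sum ..).symm
    _ ≤ √8 / √m * 1 := by
        gcongr
        exact sum_le_hasSum s (fun z _ => srwProb_nonneg m z) (hasSum_srwProb m)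
    _ = √8 / √m := mul_one _

lemma prevV_eq_cons {α : Type*} {k : ℕ} (a : α) (v : Fin k → α) (j : Fin k) :
    prevV a v j = (Fin.cons a v : Fin (k + 1) → α) j.castSucc := by
  rcases j with ⟨_ | j, hj⟩
  · rfl
  · exact (Fin.cons_succ (α := fun _ => α) a v ⟨j, Nat.lt_of_succ_lt hj⟩).symm

def increments {G : Type*} [Zero G] [Sub G] {k : ℕ} (x : Fin k → G) (j : Fin k) : G :=
  x j - prevV 0 x j

lemma increments_eq_cons {G : Type*} [Zero G] [Sub G] {k : ℕ} (x : Fin k → G) (j : Fin k) :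
    increments x j =
      (Fin.cons 0 x : Fin (k + 1) → G) j.succ - (Fin.cons 0 x : Fin (k + 1) → G) j.castSucc := by
  rw [increments, prevV_eq_cons, Fin.cons_succ]

lemma increments_injective {G : Type*} [AddGroup G] {k : ℕ} :
    Function.Injective (increments : (Fin k → G) → Fin k → G) := by
  intro x x' h
  suffices (Fin.cons 0 x : Fin (k + 1) → G) = Fin.cons 0 x' from Fin.cons_right_injective 0 this
  funext j
  induction j using Fin.induction with
  | zero => simp
  | succ j ih =>
    have hj := congrFun h j
    rwa [increments_eq_cons, increments_eq_cons, ih, sub_left_inj] at hj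

lemma Fin.sum_succ_tsub_castSucc {k : ℕ} {y : Fin (k + 1) → ℕ} (hy : Monotone y) :
    ∑ j : Fin k, (y j.succ - y j.castSucc) = y (Fin.last k) - y 0 := by
  induction k with
  | zero => simp
  | succ k ih =>
    have hinit := ih (hy.comp Fin.strictMono_castSucc.monotone)
    simp only [Function.comp_apply, ← Fin.succ_castSucc, Fin.castSucc_zero] at hinit
    rw [Fin.sum_univ_castSucc, hinit, ← Fin.succ_last]
    have h0 := hy (Fin.zero_le (Fin.last k).castSucc)
    have hlast := hy (Fin.castSucc_le_succ (Fin.last k))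
    omega

section incrTimes

variable {k M : ℕ} {i : Fin k → ℕ}

lemma strictMono_cons_of_mem_incrTimes (hi : i ∈ incrTimes k M) :
    StrictMono (Fin.cons 0 i : Fin (k + 1) → ℕ) := by
  simp only [incrTimes, mem_filter, Fintype.mem_piFinset, mem_Icc] at hi
  exact Fin.strictMono_cons.2 ⟨fun j => (hi.1 j).1, fun a b hab => hi.2 a b hab⟩

lemma le_of_mem_incrTimes (hi : i ∈ incrTimes k M) (j : Fin k) : i j ≤ M := by
  simp only [incrTimes, mem_filter, Fintype.mem_piFinset, mem_Icc] at hi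
  exact (hi.1 j).2

lemma increments_mem_Icc (hi : i ∈ incrTimes k M) (j : Fin k) : increments i j ∈ Icc 1 M := by
  have hlt := strictMono_cons_of_mem_incrTimes hi j.castSucc_lt_succ
  have hle := le_of_mem_incrTimes hi j
  rw [increments_eq_cons, mem_Icc]
  simp only [Fin.cons_succ] at hlt ⊢
  omega

lemma sum_increments_le (hi : i ∈ incrTimes k M) : ∑ j, increments i j ≤ M := by
  have hmono := (strictMono_cons_of_mem_incrTimes hi).monotone
  simp only [increments_eq_cons, Fin.sum_succ_tsub_castSucc hmono]
  refine (Nat.sub_le _ _).trans ?_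
  cases k with
  | zero => simp
  | succ k => simpa using le_of_mem_incrTimes hi (Fin.last k)

lemma increments_injOn : Set.InjOn increments (incrTimes k M : Set (Fin k → ℕ)) := by
  have hcast : ∀ i ∈ incrTimes k M,
      (fun j => ((increments i j : ℕ) : ℤ)) = increments (fun j => (i j : ℤ)) := by
    intro i hi
    funext j
    have hle := (strictMono_cons_of_mem_incrTimes hi).monotone j.castSucc_le_succ
    rw [increments_eq_cons, Nat.cast_sub hle, increments_eq_cons]
    simp only [← Function.comp_apply (f := ((↑) : ℕ → ℤ)), Fin.comp_cons]
    rfl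
  intro i hi i' hi' h
  have := increments_injective
    (hcast i hi ▸ hcast i' hi' ▸ congrArg (fun (m : Fin k → ℕ) j => (m j : ℤ)) h)
  funext j
  exact_mod_cast congrFun this j

end incrTimes

lemma hasSum_prod_of_support_subset {ι κ R : Type*} [Fintype ι] [DecidableEq ι]
    [CommSemiring R] [TopologicalSpace R] (g : ι → κ → R) (s : Finset κ)
    (hg : ∀ j, ∀ z ∉ s, g j z = 0) :
    HasSum (fun y : ι → κ => ∏ j, g j (y j)) (∏ j, ∑ z ∈ s, g j z) := by
  rw [prod_univ_sum]
  refine hasSum_sum_of_ne_finset_zero fun y hy => ?_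
  obtain ⟨j, hj⟩ := not_forall.mp (mt Fintype.mem_piFinset.mpr hy)
  exact prod_eq_zero (mem_univ j) (hg j _ hj)

lemma tsum_prod_srwProb_increments_sq_le {k : ℕ} (m : Fin k → ℕ) (hm : ∀ j, 0 < m j) :
    ∑' x : Fin k → ℤ, ∏ j, srwProb (m j) (increments x j) ^ 2 ≤ ∏ j, √8 / √(m j : ℝ) := by
  set N : ℤ := ∑ j, (m j : ℤ)
  have hsupp : ∀ j, ∀ z ∉ Icc (-N) N, srwProb (m j) z ^ 2 = 0 := by
    intro j z hz
    have hmN : (m j : ℤ) ≤ N := single_le_sum (fun l _ => Nat.cast_nonneg (m l)) (mem_univ j)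
    rw [srwProb_eq_zero_of_lt_abs (lt_of_le_of_lt hmN (by rw [mem_Icc] at hz; rw [lt_abs]; omega)),
      zero_pow two_ne_zero]
  have hprod := hasSum_prod_of_support_subset _ _ hsupp
  calc ∑' x : Fin k → ℤ, ∏ j, srwProb (m j) (increments x j) ^ 2
      ≤ ∑' y : Fin k → ℤ, ∏ j, srwProb (m j) (y j) ^ 2 :=
        tsum_comp_le_tsum_of_inj hprod.summable (fun y => by positivity) increments_injective
    _ = ∏ j, ∑ z ∈ Icc (-N) N, srwProb (m j) z ^ 2 := hprod.tsum_eq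
    _ ≤ ∏ j, √8 / √(m j : ℝ) :=
        prod_le_prod (fun j _ => by positivity) fun j _ => sum_sq_srwProb_le (hm j) _

/-- Rankin's trick: the increments of `i ∈ incrTimes k M` sum to at most `M`, so the weights
`exp (-t m_j)` cost at most `exp (t M)`, after which the constraint can be dropped. -/
lemma sum_incrTimes_prod_le (f : ℕ → ℝ) (hf : ∀ m, 0 ≤ f m) {t : ℝ} (ht : 0 ≤ t) (k M : ℕ) :
    ∑ i ∈ incrTimes k M, ∏ j, f (increments i j)
      ≤ exp (t * M) * (∑ m ∈ Icc 1 M, f m * exp (-(t * m))) ^ k := by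
  set g : ℕ → ℝ := fun m => f m * exp (-(t * m))
  have htilt : ∀ i ∈ incrTimes k M,
      ∏ j, f (increments i j) ≤ exp (t * M) * ∏ j, g (increments i j) := by
    intro i hi
    have hsum : ∑ j, ((increments i j : ℕ) : ℝ) ≤ M := by exact_mod_cast sum_increments_le hi
    have hprod : ∏ j, g (increments i j)
        = (∏ j, f (increments i j)) * exp (-(t * ∑ j, ((increments i j : ℕ) : ℝ))) := by
      rw [prod_mul_distrib, ← exp_sum, mul_sum, ← sum_neg_distrib]
    rw [hprod, mul_left_comm, ← exp_add]
    refine le_mul_of_one_le_right (prod_nonneg fun j _ => hf _) (one_le_exp ?_)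
    nlinarith
  calc ∑ i ∈ incrTimes k M, ∏ j, f (increments i j)
      ≤ ∑ i ∈ incrTimes k M, exp (t * M) * ∏ j, g (increments i j) := sum_le_sum htilt
    _ = exp (t * M) * ∑ m ∈ (incrTimes k M).image increments, ∏ j, g (m j) := by
        rw [sum_image increments_injOn, mul_sum]
    _ ≤ exp (t * M) * ∑ m ∈ Fintype.piFinset fun _ : Fin k => Icc 1 M, ∏ j, g (m j) := by
        refine mul_le_mul_of_nonneg_left (sum_le_sum_of_subset_of_nonneg ?_ ?_) (exp_pos _).le
        · intro m hm
          obtain ⟨i, hi, rfl⟩ := mem_image.mp hm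
          exact Fintype.mem_piFinset.mpr (increments_mem_Icc hi)
        · exact fun m _ _ => prod_nonneg fun j _ => mul_nonneg (hf _) (exp_pos _).le
    _ = exp (t * M) * (∑ m ∈ Icc 1 M, g m) ^ k := by
        rw [← prod_univ_sum, prod_const, card_univ, Fintype.card_fin]

lemma inv_sqrt_succ_le (l : ℕ) : (√(l + 1 : ℝ))⁻¹ ≤ 2 * (√(l + 1 : ℝ) - √(l : ℝ)) := by
  have ha : √(l + 1 : ℝ) ^ 2 = l + 1 := Real.sq_sqrt (by positivity)
  have hb : √(l : ℝ) ^ 2 = l := Real.sq_sqrt (by positivity)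
  have hpos : 0 < √(l + 1 : ℝ) := Real.sqrt_pos.mpr (by positivity)
  rw [inv_le_iff_one_le_mul₀ hpos]
  nlinarith [sq_nonneg (√(l + 1 : ℝ) - √(l : ℝ))]

lemma sum_Icc_inv_sqrt_le (N : ℕ) : ∑ m ∈ Icc 1 N, (√(m : ℝ))⁻¹ ≤ 2 * √(N : ℝ) := by
  rw [← Finset.Ico_add_one_right_eq_Icc, sum_Ico_eq_sum_range, Nat.add_sub_cancel]
  calc ∑ l ∈ range N, (√((1 + l : ℕ) : ℝ))⁻¹
      ≤ ∑ l ∈ range N, 2 * (√((l + 1 : ℕ) : ℝ) - √(l : ℝ)) :=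
        sum_le_sum fun l _ => by push_cast; rw [add_comm]; exact inv_sqrt_succ_le l
    _ = 2 * √(N : ℝ) := by
        rw [← mul_sum, sum_range_sub (fun l => √(l : ℝ)), Nat.cast_zero, Real.sqrt_zero, sub_zero]

lemma sum_Icc_exp_neg_mul_le {t : ℝ} (ht : 0 < t) (M : ℕ) :
    ∑ m ∈ Icc 1 M, exp (-(t * m)) ≤ t⁻¹ := by
  have hr : exp (-t) < 1 := exp_lt_one_iff.mpr (neg_lt_zero.mpr ht)
  calc ∑ m ∈ Icc 1 M, exp (-(t * m)) = ∑ m ∈ Ico 1 (M + 1), exp (-t) ^ m := by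
        rw [Ico_add_one_right_eq_Icc]
        exact sum_congr rfl fun m _ => by rw [← exp_nat_mul]; ring_nf
    _ ≤ exp (-t) ^ 1 / (1 - exp (-t)) := geom_sum_Ico_le_of_lt_one (exp_pos _).le hr
    _ = (exp t - 1)⁻¹ := by
        have : exp t - 1 ≠ 0 := by linarith [add_one_le_exp t, ht]
        rw [pow_one, exp_neg]
        field_simp
    _ ≤ t⁻¹ := inv_anti₀ ht (by linarith [add_one_le_exp t])

/-- Terms with `m ≤ 1/t` contribute at most `2 / √t` by `sum_Icc_inv_sqrt_le`, and for the
others `1 / √m < √t`, leaving a geometric series. -/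
lemma sum_Icc_inv_sqrt_mul_exp_le {t : ℝ} (ht : 0 < t) (M : ℕ) :
    ∑ m ∈ Icc 1 M, (√(m : ℝ))⁻¹ * exp (-(t * m)) ≤ 3 / √t := by
  set N := ⌊t⁻¹⌋₊
  rw [← sum_filter_add_sum_filter_not _ (· ≤ N)]
  have hsmall : ∑ m ∈ Icc 1 M with m ≤ N, (√(m : ℝ))⁻¹ * exp (-(t * m)) ≤ 2 / √t :=
    calc ∑ m ∈ Icc 1 M with m ≤ N, (√(m : ℝ))⁻¹ * exp (-(t * m))
        ≤ ∑ m ∈ Icc 1 N, (√(m : ℝ))⁻¹ := by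
          refine (sum_le_sum fun m _ => ?_).trans
            (sum_le_sum_of_subset_of_nonneg (fun m hm => ?_) fun m _ _ => by positivity)
          · exact mul_le_of_le_one_right (by positivity) (exp_le_one_iff.mpr (by nlinarith))
          · simp only [mem_filter, mem_Icc] at hm ⊢
            omega
      _ ≤ 2 * √(N : ℝ) := sum_Icc_inv_sqrt_le N
      _ ≤ 2 * √t⁻¹ := by gcongr; exact Nat.floor_le (by positivity)
      _ = 2 / √t := by rw [Real.sqrt_inv, div_eq_mul_inv]
  have hlarge : ∑ m ∈ Icc 1 M with ¬m ≤ N, (√(m : ℝ))⁻¹ * exp (-(t * m)) ≤ 1 / √t :=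
    calc ∑ m ∈ Icc 1 M with ¬m ≤ N, (√(m : ℝ))⁻¹ * exp (-(t * m))
        ≤ ∑ m ∈ Icc 1 M, √t * exp (-(t * m)) := by
          refine (sum_le_sum fun m hm => ?_).trans
            (sum_le_sum_of_subset_of_nonneg (filter_subset _ _) fun m _ _ => by positivity)
          have hm : t⁻¹ < m := Nat.lt_of_floor_lt (not_le.mp (mem_filter.mp hm).2)
          gcongr
          rw [← Real.sqrt_inv]
          exact Real.sqrt_le_sqrt (inv_lt_of_inv_lt₀ ht hm).le
      _ ≤ √t * t⁻¹ := by rw [← mul_sum]; gcongr; exact sum_Icc_exp_neg_mul_le ht M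
      _ = 1 / √t := by
          have := Real.sq_sqrt ht.le
          field_simp
          linarith
  exact (add_le_add hsmall hlarge).trans_eq (by ring)

lemma sum_incrTimes_tsum_prod_srwProb_sq_le {t : ℝ} (ht : 0 < t) (k M : ℕ) :
    ∑ i ∈ incrTimes k M, ∑' x : Fin k → ℤ, ∏ j, srwProb (increments i j) (increments x j) ^ 2
      ≤ exp (t * M) * (√8 * (3 / √t)) ^ k := by
  have hseries : ∑ m ∈ Icc 1 M, √8 / √(m : ℝ) * exp (-(t * m)) ≤ √8 * (3 / √t) := by
    simp_rw [div_eq_mul_inv (√8), mul_assoc, ← mul_sum]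
    gcongr
    exact sum_Icc_inv_sqrt_mul_exp_le ht M
  calc ∑ i ∈ incrTimes k M, ∑' x : Fin k → ℤ, ∏ j, srwProb (increments i j) (increments x j) ^ 2
      ≤ ∑ i ∈ incrTimes k M, ∏ j, √8 / √((increments i j : ℕ) : ℝ) :=
        sum_le_sum fun i hi => tsum_prod_srwProb_increments_sq_le _ fun j =>
          (mem_Icc.mp (increments_mem_Icc hi j)).1
    _ ≤ exp (t * M) * (∑ m ∈ Icc 1 M, √8 / √(m : ℝ) * exp (-(t * m))) ^ k :=
        sum_incrTimes_prod_le (fun m => √8 / √(m : ℝ)) (fun m => by positivity) ht.le k M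
    _ ≤ exp (t * M) * (√8 * (3 / √t)) ^ k := by gcongr

/-- Log-convexity of `Γ` between `1` and `k + 1` gives `Γ (k/2 + 1) ≤ √(k!)`. -/
lemma Gamma_half_add_one_le (k : ℕ) : Gamma ((k : ℝ) / 2 + 1) ≤ √(k : ℝ) ^ k := by
  have h := Gamma_mul_add_mul_le_rpow_Gamma_mul_rpow_Gamma (s := 1) (t := k + 1)
    one_pos (by positivity) one_half_pos one_half_pos (add_halves 1)
  rw [Gamma_one, one_rpow, one_mul, Gamma_nat_eq_factorial, ← sqrt_eq_rpow] at h
  calc Gamma ((k : ℝ) / 2 + 1) = Gamma (1 / 2 * 1 + 1 / 2 * (k + 1)) := by ring_nf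
    _ ≤ √(k.factorial : ℝ) := h
    _ ≤ √((k : ℝ) ^ k) := Real.sqrt_le_sqrt (by exact_mod_cast Nat.factorial_le_pow k)
    _ = √(k : ℝ) ^ k := by
        rw [Real.sqrt_eq_iff_eq_sq (by positivity) (by positivity), ← pow_mul, mul_comm, pow_mul,
          Real.sq_sqrt (by positivity)]

theorem sum_squared_transition_bound :
    ∃ C : ℝ, 0 < C ∧ ∀ k : ℕ, 1 ≤ k → ∀ T : ℝ, 0 < T → ∀ n : ℕ, 1 ≤ n →
      ((n : ℝ) ^ ((k : ℝ) / 2))⁻¹ *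
          ∑ i ∈ incrTimes k ⌊T * n⌋₊,
            ∑' x : Fin k → ℤ,
              ∏ j : Fin k, (srwProb (i j - prevV 0 i j) (x j - prevV 0 x j)) ^ 2
        ≤ C ^ k * T ^ ((k : ℝ) / 2) / Real.Gamma ((k : ℝ) / 2 + 1) := by
  refine ⟨3 * √8 * exp 1, by positivity, fun k hk T hT n hn => ?_⟩
  have hn' : (0 : ℝ) < n := by exact_mod_cast hn
  have hk' : (0 : ℝ) < k := by exact_mod_cast hk
  set M := ⌊T * n⌋₊
  set t : ℝ := k / (T * n)
  have ht : 0 < t := by positivity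
  have hexp : exp (t * M) ≤ exp 1 ^ k := by
    rw [← exp_nat_mul, mul_one]
    gcongr
    calc t * M ≤ t * (T * n) := by gcongr; exact Nat.floor_le (by positivity)
      _ = k := div_mul_cancel₀ _ (by positivity)
  calc ((n : ℝ) ^ ((k : ℝ) / 2))⁻¹ * ∑ i ∈ incrTimes k M,
        ∑' x : Fin k → ℤ, ∏ j, srwProb (increments i j) (increments x j) ^ 2
      ≤ ((n : ℝ) ^ ((k : ℝ) / 2))⁻¹ * (exp 1 ^ k * (√8 * (3 / √t)) ^ k) := by
        gcongr
        exact (sum_incrTimes_tsum_prod_srwProb_sq_le ht k M).trans (by gcongr)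
    _ = (3 * √8 * exp 1) ^ k * √T ^ k / √(k : ℝ) ^ k := by
        rw [rpow_div_two_eq_sqrt _ hn'.le, rpow_natCast, Real.sqrt_div' _ (by positivity),
          Real.sqrt_mul hT.le]
        have : √(k : ℝ) ≠ 0 := by positivity
        field_simp
        rw [div_pow]
        field_simp
        ring
    _ ≤ (3 * √8 * exp 1) ^ k * T ^ ((k : ℝ) / 2) / Gamma ((k : ℝ) / 2 + 1) := by
        rw [rpow_div_two_eq_sqrt _ hT.le, rpow_natCast]
        gcongr
        exact Gamma_half_add_one_le k

end
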